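/- Fix an integer d ≥ 1. For every constant c > 0 there exist a point p ∈ ℝ^d and a radius r > 0 with closedBall(p, r) ⊆ [0,1]^d, such that every collection of at most 2^d − 1 dyadic cubes whose union contains closedBall(p, r) has total volume greater than c times the volume of the ball closedBall(p, r). -/

import Mathlib

open MeasureTheory Metric Set

/-- The dyadic cube of level `k` with index vector `a` in the unit cube `[0,1]^d`:
`∏ᵢ [aᵢ·2⁻ᵏ, (aᵢ+1)·2⁻ᵏ]`. -/
def dyadicCube (d k : ℕ) (a : Fin d → ℕ) : Set (EuclideanSpace ℝ (Fin d)) :=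
  {x | ∀ i, x i ∈ Icc ((a i : ℝ) / 2 ^ k) (((a i : ℝ) + 1) / 2 ^ k)}

/-- The unit cube `[0,1]^d`. -/
def unitCube (d : ℕ) : Set (EuclideanSpace ℝ (Fin d)) := {x | ∀ i, x i ∈ Icc (0 : ℝ) 1}

/-!
Let `p` be the centre of `[0,1]^d` and `r = 1 / (2 (c + 1))`, so that `c · vol B(p, r) < vol B(p, 1/2)`.
The ball `B(p, r)` contains the `2^d` points `p + δ ε`, `ε ∈ {±1}^d`. Since `1/2` is a grid point
of every level `k ≥ 1`, it never lies inside a coordinate interval of a dyadic cube of such a level,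
so such a cube contains at most one of these points. Hence `2^d − 1` dyadic cubes covering `B(p, r)`
include one of level `0`, that is `[0,1]^d ⊇ B(p, 1/2)`.
-/
theorem ofReal_mul_addHaar_closedBall_div_lt {E : Type*} [NormedAddCommGroup E]
    [NormedSpace ℝ E] [MeasurableSpace E] [BorelSpace E] [FiniteDimensional ℝ E]
    (μ : Measure E) [μ.IsAddHaarMeasure] (hE : 0 < Module.finrank ℝ E) (x : E) {c s : ℝ}
    (hc : 0 ≤ c) (hs : 0 < s) :
    ENNReal.ofReal c * μ (closedBall x (s / (c + 1))) < μ (closedBall x s) := by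
  have hc1 : 0 < c + 1 := by linarith
  have hfactor : c * (c + 1)⁻¹ ^ Module.finrank ℝ E < 1 :=
    calc c * (c + 1)⁻¹ ^ Module.finrank ℝ E ≤ c * (c + 1)⁻¹ := by
          gcongr
          exact pow_le_of_le_one (by positivity) (inv_le_one_of_one_le₀ (by linarith)) hE.ne'
      _ < 1 := by rw [← div_eq_mul_inv, div_lt_one hc1]; linarith
  rw [div_eq_inv_mul, Measure.addHaar_closedBall_mul_of_pos μ x (inv_pos.2 hc1), ← mul_assoc,
    ← ENNReal.ofReal_mul hc, Measure.addHaar_closedBall_center μ x s, mul_comm]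
  calc μ (closedBall 0 s) * ENNReal.ofReal (c * (c + 1)⁻¹ ^ Module.finrank ℝ E)
      < μ (closedBall 0 s) * 1 :=
        ENNReal.mul_lt_mul_right (measure_closedBall_pos μ 0 hs).ne' measure_closedBall_lt_top.ne
          (ENNReal.ofReal_lt_one.2 hfactor)
    _ = μ (closedBall 0 s) := mul_one _

noncomputable section

def unitCubeCenter (d : ℕ) : EuclideanSpace ℝ (Fin d) := WithLp.toLp 2 fun _ => 1 / 2

def centralCubeVertex (d : ℕ) (δ : ℝ) (ε : Fin d → Bool) : EuclideanSpace ℝ (Fin d) :=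
  WithLp.toLp 2 fun i => 1 / 2 + if ε i then δ else -δ

end

theorem closedBall_unitCubeCenter_subset_unitCube {d : ℕ} {r : ℝ} (hr : r ≤ 1 / 2) :
    closedBall (unitCubeCenter d) r ⊆ unitCube d := by
  intro x hx i
  have hxi : |x i - 1 / 2| ≤ r := (PiLp.dist_apply_le x (unitCubeCenter d) i).trans hx
  rw [abs_le] at hxi
  constructor <;> linarith [hxi.1, hxi.2]

theorem dist_centralCubeVertex_unitCubeCenter (d : ℕ) {δ : ℝ} (hδ : 0 ≤ δ) (ε : Fin d → Bool) :
    dist (centralCubeVertex d δ ε) (unitCubeCenter d) = √d * δ := by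
  have hcoord : ∀ i, dist (centralCubeVertex d δ ε i) (unitCubeCenter d i) ^ 2 = δ ^ 2 := by
    intro i
    simp only [centralCubeVertex, unitCubeCenter, Real.dist_eq, sq_abs]
    split_ifs <;> ring
  rw [EuclideanSpace.dist_eq, Finset.sum_congr rfl fun i _ => hcoord i, Finset.sum_const,
    Finset.card_univ, Fintype.card_fin, nsmul_eq_mul, Real.sqrt_mul (Nat.cast_nonneg d),
    Real.sqrt_sq hδ]

theorem level_eq_zero_of_half_mem_Ioo {k a : ℕ}
    (h : 1 / 2 ∈ Ioo ((a : ℝ) / 2 ^ k) (((a : ℝ) + 1) / 2 ^ k)) : k = 0 := by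
  obtain _ | j := k
  · rfl
  obtain ⟨hlo, hhi⟩ := h
  have h2 : (0 : ℝ) < 2 ^ j := by positivity
  rw [pow_succ, div_lt_iff₀ (by positivity)] at hlo
  rw [pow_succ, lt_div_iff₀ (by positivity)] at hhi
  have hlo' : a < 2 ^ j := by exact_mod_cast (by linarith : (a : ℝ) < 2 ^ j)
  have hhi' : 2 ^ j < a + 1 := by exact_mod_cast (by linarith : (2 : ℝ) ^ j < a + 1)
  omega

theorem level_eq_zero_of_sub_add_mem_Icc {k a : ℕ} {δ : ℝ} (hδ : 0 < δ)
    (hsub : 1 / 2 - δ ∈ Icc ((a : ℝ) / 2 ^ k) (((a : ℝ) + 1) / 2 ^ k))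
    (hadd : 1 / 2 + δ ∈ Icc ((a : ℝ) / 2 ^ k) (((a : ℝ) + 1) / 2 ^ k)) : k = 0 :=
  level_eq_zero_of_half_mem_Ioo (a := a) ⟨by linarith [hsub.1], by linarith [hadd.2]⟩

theorem eq_of_centralCubeVertex_mem_dyadicCube {d k : ℕ} (hk : k ≠ 0) {a : Fin d → ℕ}
    {δ : ℝ} (hδ : 0 < δ) {ε ε' : Fin d → Bool} (h : centralCubeVertex d δ ε ∈ dyadicCube d k a)
    (h' : centralCubeVertex d δ ε' ∈ dyadicCube d k a) : ε = ε' := by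
  funext i
  have hi := h i
  have hi' := h' i
  simp only [centralCubeVertex] at hi hi'
  cases hε : ε i <;> cases hε' : ε' i <;>
    simp only [hε, hε', Bool.false_eq_true, if_true, if_false, ← sub_eq_add_neg] at hi hi' ⊢
  · exact (hk (level_eq_zero_of_sub_add_mem_Icc hδ hi hi')).elim
  · exact (hk (level_eq_zero_of_sub_add_mem_Icc hδ hi' hi)).elim

theorem two_pow_le_card_of_centralCubeVertex_mem {d : ℕ} {δ : ℝ} (hδ : 0 < δ)
    {S : Finset (ℕ × (Fin d → ℕ))} (hS : ∀ q ∈ S, q.1 ≠ 0)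
    (hcover : ∀ ε, centralCubeVertex d δ ε ∈ ⋃ q ∈ S, dyadicCube d q.1 q.2) :
    2 ^ d ≤ S.card := by
  choose f hfS hf using fun ε => mem_iUnion₂.1 (hcover ε)
  have hinj : Set.InjOn f (Finset.univ : Finset (Fin d → Bool)) := fun ε _ ε' _ hεε' =>
    eq_of_centralCubeVertex_mem_dyadicCube (hS _ (hfS ε')) hδ (hεε' ▸ hf ε) (hf ε')
  simpa using Finset.card_le_card_of_injOn f (fun ε _ => hfS ε) hinj

theorem dyadicCube_zero_zero (d : ℕ) : dyadicCube d 0 0 = unitCube d := by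
  ext x
  simp [dyadicCube, unitCube]

/-- Lower bound: no `2^d − 1` dyadic cubes of relatively small total volume can always
cover a ball; i.e. the uniform hypercube tiling has Arrwwid number at least `2^d`. -/
theorem cube_tiling_arrwwid_lower_bound (d : ℕ) (hd : 1 ≤ d) (c : ℝ) (hc : 0 < c) :
    ∃ (p : EuclideanSpace ℝ (Fin d)) (r : ℝ), 0 < r ∧ closedBall p r ⊆ unitCube d ∧
      ∀ S : Finset (ℕ × (Fin d → ℕ)), S.card ≤ 2 ^ d - 1 →
        (∀ q ∈ S, ∀ i, q.2 i < 2 ^ q.1) →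
        closedBall p r ⊆ ⋃ q ∈ S, dyadicCube d q.1 q.2 →
        ENNReal.ofReal c * volume (closedBall p r) <
          ∑ q ∈ S, volume (dyadicCube d q.1 q.2) := by
  set r := 1 / 2 / (c + 1)
  have hr : 0 < r := by positivity
  refine ⟨unitCubeCenter d, r, hr,
    closedBall_unitCubeCenter_subset_unitCube (div_le_self (by norm_num) (by linarith)), ?_⟩
  intro S hcard hS hcover
  obtain ⟨q, hqS, hq⟩ : ∃ q ∈ S, q.1 = 0 := by
    by_contra! hlevel
    have hsqrt : 0 < √(d : ℝ) := Real.sqrt_pos.2 (by exact_mod_cast hd)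
    have hδ : 0 < r / √d := div_pos hr hsqrt
    have hvertex (ε) : centralCubeVertex d (r / √d) ε ∈ closedBall (unitCubeCenter d) r := by
      rw [mem_closedBall, dist_centralCubeVertex_unitCubeCenter d hδ.le,
        mul_div_cancel₀ _ hsqrt.ne']
    have := two_pow_le_card_of_centralCubeVertex_mem hδ hlevel fun ε => hcover (hvertex ε)
    have := Nat.two_pow_pos d
    omega
  have hq2 : q.2 = 0 := funext fun i => Nat.lt_one_iff.1 (by simpa [hq] using hS q hqS i)
  calc ENNReal.ofReal c * volume (closedBall (unitCubeCenter d) r)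
      < volume (closedBall (unitCubeCenter d) (1 / 2)) :=
        ofReal_mul_addHaar_closedBall_div_lt volume (by simpa) _ hc.le (by norm_num)
    _ ≤ volume (dyadicCube d q.1 q.2) := by
        rw [hq, hq2, dyadicCube_zero_zero]
        exact measure_mono (closedBall_unitCubeCenter_subset_unitCube le_rfl)
    _ ≤ ∑ q ∈ S, volume (dyadicCube d q.1 q.2) :=
        Finset.single_le_sum_of_canonicallyOrdered
          (f := fun q : ℕ × (Fin d → ℕ) => volume (dyadicCube d q.1 q.2)) hqS
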